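/- Let η, P, r_B, r_E, σ² be positive reals with equal noise variances σ_B² = σ_E² = σ². If r_B < r_E, then the function f(R) = log₂( ((ηP + r_B²σ²)(ηR + r_E²σ²)) / ((ηP + r_E²σ²)(ηR + r_B²σ²)) ) attains its maximum over R ∈ [0, P] at R = 0, i.e., the optimal strategy allocates zero power to artificial noise. -/

import Mathlib

/-! Only the factor `(ηR + r_E²σ²)/(ηR + r_B²σ²)` of the argument of `log₂` depends on `R`.
It equals `1 + (r_E² - r_B²)σ²/(ηR + r_B²σ²)`, so it decreases in `R` when `r_B < r_E`,
and `log₂` is increasing. -/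

theorem add_div_add_antitoneOn {𝕜 : Type*} [Field 𝕜] [LinearOrder 𝕜] [IsStrictOrderedRing 𝕜]
    {a b : 𝕜} (hba : b ≤ a) : AntitoneOn (fun x => (x + a) / (x + b)) (Set.Ioi (-b)) := by
  intro x hx y hy hxy
  have hx : 0 < x + b := neg_lt_iff_pos_add.mp hx
  have hy : 0 < y + b := neg_lt_iff_pos_add.mp hy
  rw [div_le_div_iff₀ hy hx]
  nlinarith [mul_le_mul_of_nonneg_left hxy (sub_nonneg.2 hba)]

theorem no_AN_optimal_when_Bob_closer_general (η P rB rE σ2 : ℝ)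
    (hη : 0 < η) (hrB : 0 < rB) (hσ : 0 < σ2)
    (hlt : rB < rE)
    (f : ℝ → ℝ)
    (hf : ∀ R, f R = Real.logb 2
      (((η * P + rB ^ 2 * σ2) * (η * R + rE ^ 2 * σ2)) /
       ((η * P + rE ^ 2 * σ2) * (η * R + rB ^ 2 * σ2)))) :
    ∀ R ∈ Set.Icc (0 : ℝ) P, f R ≤ f 0 := by
  rintro R ⟨hR0, hRP⟩
  have hP : 0 ≤ P := hR0.trans hRP
  have hrE : 0 < rE := hrB.trans hlt
  have hbe : rB ^ 2 * σ2 ≤ rE ^ 2 * σ2 := by gcongr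
  have hmem : ∀ x : ℝ, 0 ≤ x → η * x ∈ Set.Ioi (-(rB ^ 2 * σ2)) := fun x hx =>
    Set.mem_Ioi.mpr (neg_lt_iff_pos_add.mpr (by positivity))
  have hdecr : (η * R + rE ^ 2 * σ2) / (η * R + rB ^ 2 * σ2)
      ≤ (η * 0 + rE ^ 2 * σ2) / (η * 0 + rB ^ 2 * σ2) :=
    add_div_add_antitoneOn hbe (hmem 0 le_rfl) (hmem R hR0) (by simpa using mul_nonneg hη.le hR0)
  rw [hf, hf, mul_div_mul_comm, mul_div_mul_comm]
  exact Real.logb_le_logb_of_le one_lt_two (by positivity)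
    (mul_le_mul_of_nonneg_left hdecr (by positivity))

/-- With equal noise variances, if Bob is closer than Eve then it is optimal to
allocate no power to artificial noise. -/
theorem no_AN_optimal_when_Bob_closer (η P rB rE σ2 : ℝ)
    (hη : 0 < η) (hP : 0 < P) (hrB : 0 < rB) (hrE : 0 < rE) (hσ : 0 < σ2)
    (hlt : rB < rE)
    (f : ℝ → ℝ)
    (hf : ∀ R, f R = Real.logb 2
      (((η * P + rB ^ 2 * σ2) * (η * R + rE ^ 2 * σ2)) /
       ((η * P + rE ^ 2 * σ2) * (η * R + rB ^ 2 * σ2)))) :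
    ∀ R ∈ Set.Icc (0 : ℝ) P, f R ≤ f 0 :=
  no_AN_optimal_when_Bob_closer_general η P rB rE σ2 hη hrB hσ hlt f hf
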